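/- arXiv:2502.04194 — 2 statements merged into one kernel-verified Lean document; each statement's English description precedes it below -/
import Mathlib

section
/- (Theorem 1, policy-guided selection minimizes KL.) Let R be a finite set, let q be a probability mass function on R with q(r) > 0 for all r in a candidate pool T ⊆ R, and let 1 ≤ K ≤ |T|. Let S* ⊆ T be a top-K subset of T under q, and let p̂ denote the renormalized restriction of q to S*, i.e. p̂(r) = q(r)/∑_{r'∈S*} q(r') for r ∈ S* and p̂(r) = 0 otherwise. Then for every probability mass function p on R whose support is contained in some subset S ⊆ T with |S| ≤ K, D_KL(p̂‖q) ≤ D_KL(p‖q). -/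
/-- Kullback–Leibler divergence of `p` from `q` on a finite type, with the
convention `0 · log 0 = 0` (terms with `p r = 0` vanish since `0 * _ = 0`). -/
noncomputable def klDiv {R : Type*} [Fintype R] (p q : R → ℝ) : ℝ :=
  ∑ r, p r * Real.log (p r / q r)

/-- **Theorem 1: policy-guided selection minimizes KL.**
Let `q` be a probability mass function on a finite set `R`, positive on a
candidate pool `T ⊆ R`, and `1 ≤ K ≤ |T|`. Let `S* ⊆ T` be a top-`K` subset of
`T` under `q`, and let `p̂` be the renormalized restriction of `q` to `S*`.
Then for every probability mass function `p` whose support is contained in some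
subset `S ⊆ T` with `|S| ≤ K`, we have `D_KL(p̂‖q) ≤ D_KL(p‖q)`. -/
theorem topK_renormalized_restriction_minimizes_klDiv
    {R : Type*} [Fintype R] [DecidableEq R]
    (q : R → ℝ) (hq0 : ∀ r, 0 ≤ q r) (hq1 : ∑ r, q r = 1)
    (T : Finset R) (hqT : ∀ r ∈ T, 0 < q r)
    (K : ℕ) (hK1 : 1 ≤ K) (hK2 : K ≤ T.card)
    (Sstar : Finset R) (hSstarT : Sstar ⊆ T) (hScard : Sstar.card = K)
    (htop : ∀ r ∈ Sstar, ∀ r' ∈ T \ Sstar, q r' ≤ q r)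
    (phat : R → ℝ)
    (hphat : ∀ r, phat r = if r ∈ Sstar then q r / (∑ r' ∈ Sstar, q r') else 0)
    (p : R → ℝ) (hp0 : ∀ r, 0 ≤ p r) (hp1 : ∑ r, p r = 1)
    (S : Finset R) (hST : S ⊆ T) (hSK : S.card ≤ K)
    (hsupp : ∀ r, 0 < p r → r ∈ S) :
    klDiv phat q ≤ klDiv p q := by
  set Z : ℝ := ∑ r' ∈ Sstar, q r' with hZdef
  have hne : Sstar.Nonempty := Finset.card_pos.mp (by omega)
  have hZ : 0 < Z := Finset.sum_pos (fun r hr => hqT r (hSstarT hr)) hne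
  -- Step A : klDiv phat q = - log Z
  have hA : klDiv phat q = - Real.log Z := by
    unfold klDiv
    rw [← Finset.sum_subset (Finset.subset_univ Sstar)
        (by intro r _ hr; rw [hphat r, if_neg hr]; simp)]
    have hcong : ∀ r ∈ Sstar, phat r * Real.log (phat r / q r)
        = q r / Z * (- Real.log Z) := by
      intro r hr
      have hqr : 0 < q r := hqT r (hSstarT hr)
      rw [hphat r, if_pos hr]
      congr 1
      rw [Real.log_div (by positivity) hqr.ne', Real.log_div hqr.ne' hZ.ne']
      ring
    rw [Finset.sum_congr rfl hcong, ← Finset.sum_mul, ← Finset.sum_div,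
      ← hZdef, div_self hZ.ne', one_mul]
  -- Step C : ∑_{S} q ≤ Z
  have hC : ∑ r ∈ S, q r ≤ Z := by
    have hcard : (S \ Sstar).card ≤ (Sstar \ S).card := by
      have h1 : (S ∩ Sstar).card + (S \ Sstar).card = S.card :=
        Finset.card_inter_add_card_sdiff S Sstar
      have h2 : (Sstar ∩ S).card + (Sstar \ S).card = Sstar.card :=
        Finset.card_inter_add_card_sdiff Sstar S
      have h3 : (S ∩ Sstar).card = (Sstar ∩ S).card := by rw [Finset.inter_comm]
      omega
    have hdiff : ∑ r ∈ S \ Sstar, q r ≤ ∑ r ∈ Sstar \ S, q r := by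
      rcases (Sstar \ S).eq_empty_or_nonempty with h | h
      · have h0 : (Sstar \ S).card = 0 := by simp [h]
        have : S \ Sstar = ∅ := Finset.card_eq_zero.mp (by omega)
        simp [this, h]
      · obtain ⟨r₀, hr₀, hmin⟩ := Finset.exists_min_image (Sstar \ S) q h
        have hr₀S : r₀ ∈ Sstar := (Finset.mem_sdiff.mp hr₀).1
        calc ∑ r ∈ S \ Sstar, q r ≤ (S \ Sstar).card • q r₀ := by
              apply Finset.sum_le_card_nsmul
              intro x hx
              rcases Finset.mem_sdiff.mp hx with ⟨hxS, hxn⟩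
              exact htop r₀ hr₀S x (Finset.mem_sdiff.mpr ⟨hST hxS, hxn⟩)
          _ ≤ (Sstar \ S).card • q r₀ := by
              apply nsmul_le_nsmul_left (hq0 r₀) hcard
          _ ≤ ∑ r ∈ Sstar \ S, q r := Finset.card_nsmul_le_sum _ _ _ hmin
    have e1 := Finset.sum_inter_add_sum_sdiff S Sstar q
    have e2 := Finset.sum_inter_add_sum_sdiff Sstar S q
    have e3 : ∑ r ∈ S ∩ Sstar, q r = ∑ r ∈ Sstar ∩ S, q r := by
      rw [Finset.inter_comm]
    linarith
  -- Step B : - log Z ≤ klDiv p q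
  rw [hA]
  set A : Finset R := Finset.univ.filter (fun r => 0 < p r) with hAdef
  have hpA : ∀ r ∈ A, 0 < p r := fun r hr => (Finset.mem_filter.mp hr).2
  have hAS : A ⊆ S := fun r hr => hsupp r (hpA r hr)
  have hsumA : ∑ r ∈ A, p r = 1 := by
    rw [← hp1, ← Finset.sum_subset (Finset.subset_univ A)]
    intro r _ hr
    have := hp0 r
    rcases lt_or_eq_of_le this with h | h
    · exact absurd (Finset.mem_filter.mpr ⟨Finset.mem_univ r, h⟩) hr
    · exact h.symm
  have hklp : klDiv p q = ∑ r ∈ A, p r * Real.log (p r / q r) := by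
    unfold klDiv
    rw [← Finset.sum_subset (Finset.subset_univ A)]
    intro r _ hr
    have := hp0 r
    rcases lt_or_eq_of_le this with h | h
    · exact absurd (Finset.mem_filter.mpr ⟨Finset.mem_univ r, h⟩) hr
    · rw [← h, zero_mul]
  rw [hklp]
  have key : ∀ r ∈ A, p r - q r / Z ≤ p r * Real.log (p r / q r) + p r * Real.log Z := by
    intro r hr
    have hpr : 0 < p r := hpA r hr
    have hqr : 0 < q r := hqT r (hST (hAS hr))
    have hx : 0 < q r / (p r * Z) := by positivity
    have hlog := Real.log_le_sub_one_of_pos hx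
    have hrew : Real.log (q r / (p r * Z)) = - (Real.log (p r / q r) + Real.log Z) := by
      rw [Real.log_div hqr.ne' (by positivity), Real.log_mul hpr.ne' hZ.ne',
        Real.log_div hpr.ne' hqr.ne']
      ring
    rw [hrew] at hlog
    have h2 : 1 - (Real.log (p r / q r) + Real.log Z) ≤ q r / (p r * Z) := by linarith
    have h3 := mul_le_mul_of_nonneg_left h2 hpr.le
    have h4 : p r * (q r / (p r * Z)) = q r / Z := by field_simp
    rw [h4] at h3
    nlinarith
  have hsum := Finset.sum_le_sum key
  have hqA : ∑ r ∈ A, q r ≤ Z :=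
    le_trans (Finset.sum_le_sum_of_subset_of_nonneg hAS (fun r _ _ => hq0 r)) hC
  rw [Finset.sum_sub_distrib, hsumA, Finset.sum_add_distrib,
    ← Finset.sum_mul, hsumA, one_mul] at hsum
  have hdivZ : ∑ r ∈ A, q r / Z ≤ 1 := by
    rw [← Finset.sum_div]
    exact (div_le_one hZ).mpr hqA
  linarith
end

section
/- (Strict version of Theorem 1, Step 3.) Let R be a finite set, let q be a probability mass function on R with q(r) > 0 for all r in a candidate pool T ⊆ R, let 1 ≤ K ≤ |T|, and let S* ⊆ T be a top-K subset of T under q with Z* = ∑_{r∈S*} q(r). If S ⊆ T is a subset with |S| = K and ∑_{r∈S} q(r) < Z*, then for every probability mass function p supported in S, D_KL(p‖q) > D_KL(p̂‖q), where p̂ is the renormalized restriction of q to S*. -/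
/-- **strict version of Theorem 1, Step 3.**
Let `q` be a probability mass function positive on a candidate pool `T`, with
`1 ≤ K ≤ |T|`, and let `S*` be a top-`K` subset of `T` under `q`, with
`Z* = ∑ r ∈ S*, q r`. If `S ⊆ T` has `|S| = K` and `∑ r ∈ S, q r < Z*`, then
every probability mass function `p` supported in `S` satisfies
`D_KL(p‖q) > D_KL(p̂‖q)`, where `p̂` is the renormalized restriction of `q`
to `S*`. -/
theorem klDiv_strictly_larger_of_smaller_mass
    {R : Type*} [Fintype R] [DecidableEq R]
    (q : R → ℝ) (hq0 : ∀ r, 0 ≤ q r) (hq1 : ∑ r, q r = 1)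
    (T : Finset R) (hqT : ∀ r ∈ T, 0 < q r)
    (K : ℕ) (hK1 : 1 ≤ K) (hK2 : K ≤ T.card)
    (Sstar : Finset R) (hSstarT : Sstar ⊆ T) (hScard : Sstar.card = K)
    (htop : ∀ r ∈ Sstar, ∀ r' ∈ T \ Sstar, q r' ≤ q r)
    (phat : R → ℝ)
    (hphat : ∀ r, phat r = if r ∈ Sstar then q r / (∑ r' ∈ Sstar, q r') else 0)
    (S : Finset R) (hST : S ⊆ T) (hSK : S.card = K)
    (hlt : ∑ r ∈ S, q r < ∑ r ∈ Sstar, q r)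
    (p : R → ℝ) (hp0 : ∀ r, 0 ≤ p r) (hp1 : ∑ r, p r = 1)
    (hsupp : ∀ r, 0 < p r → r ∈ S) :
    klDiv phat q < klDiv p q := by
  set Zs : ℝ := ∑ r ∈ Sstar, q r with hZs
  set Z : ℝ := ∑ r ∈ S, q r with hZ
  have hSne : S.Nonempty := Finset.card_pos.mp (by omega)
  have hSsne : Sstar.Nonempty := Finset.card_pos.mp (by omega)
  have hZpos : 0 < Z := Finset.sum_pos (fun r hr => hqT r (hST hr)) hSne
  have hZspos : 0 < Zs := lt_trans hZpos hlt
  -- Step 1: klDiv phat q = - log Zs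
  have step1 : klDiv phat q = - Real.log Zs := by
    unfold klDiv
    rw [← Finset.sum_subset (Finset.subset_univ Sstar)
      (by
        intro r _ hr
        rw [hphat r, if_neg hr]
        simp)]
    have : ∀ r ∈ Sstar, phat r * Real.log (phat r / q r)
        = q r / Zs * (- Real.log Zs) := by
      intro r hr
      have hqr : 0 < q r := hqT r (hSstarT hr)
      rw [hphat r, if_pos hr]
      rw [div_div, mul_comm Zs (q r), ← div_div, div_self hqr.ne',
        Real.log_div one_ne_zero hZspos.ne', Real.log_one, zero_sub]
    rw [Finset.sum_congr rfl this, ← Finset.sum_mul, ← Finset.sum_div,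
      ← hZs, div_self hZspos.ne', one_mul]
  -- Step 2: - log Z ≤ klDiv p q
  have step2 : - Real.log Z ≤ klDiv p q := by
    classical
    set F : Finset R := Finset.univ.filter (fun r => p r ≠ 0) with hF
    have hFS : F ⊆ S := by
      intro r hr
      rw [hF, Finset.mem_filter] at hr
      exact hsupp r (lt_of_le_of_ne (hp0 r) (Ne.symm hr.2))
    have hpF : ∑ r ∈ F, p r = 1 := by
      rw [← hp1]
      apply Finset.sum_subset (Finset.subset_univ F)
      intro r _ hr
      rw [hF, Finset.mem_filter] at hr
      push_neg at hr
      exact hr (Finset.mem_univ r)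
    have hkl : klDiv p q = ∑ r ∈ F, p r * Real.log (p r / q r) := by
      unfold klDiv
      symm
      apply Finset.sum_subset (Finset.subset_univ F)
      intro r _ hr
      rw [hF, Finset.mem_filter] at hr
      push_neg at hr
      rw [hr (Finset.mem_univ r), zero_mul]
    have key : ∀ r ∈ F, p r - q r / Z ≤ p r * (Real.log (p r / q r) + Real.log Z) := by
      intro r hr
      have hrS : r ∈ S := hFS hr
      have hqr : 0 < q r := hqT r (hST hrS)
      rw [hF, Finset.mem_filter] at hr
      have hpr : 0 < p r := lt_of_le_of_ne (hp0 r) (Ne.symm hr.2)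
      have hx : (0:ℝ) < q r / (p r * Z) := by positivity
      have hlog := Real.log_le_sub_one_of_pos hx
      have hlogeq : Real.log (q r / (p r * Z))
          = - (Real.log (p r / q r) + Real.log Z) := by
        rw [Real.log_div hqr.ne' (by positivity), Real.log_mul hpr.ne' hZpos.ne',
          Real.log_div hpr.ne' hqr.ne']
        ring
      rw [hlogeq] at hlog
      have := mul_le_mul_of_nonneg_left hlog (hp0 r)
      have h2 : p r * (q r / (p r * Z) - 1) = q r / Z - p r := by
        field_simp
      rw [h2] at this
      linarith
    have hsum := Finset.sum_le_sum key
    rw [Finset.sum_sub_distrib, hpF] at hsum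
    have hqle : ∑ r ∈ F, q r / Z ≤ 1 := by
      rw [← Finset.sum_div, div_le_one hZpos]
      exact Finset.sum_le_sum_of_subset_of_nonneg hFS (fun r _ _ => hq0 r)
    have hexp : ∑ r ∈ F, p r * (Real.log (p r / q r) + Real.log Z)
        = (∑ r ∈ F, p r * Real.log (p r / q r)) + Real.log Z := by
      rw [Finset.sum_congr rfl (fun r _ => mul_add (p r) _ _),
        Finset.sum_add_distrib, ← Finset.sum_mul, hpF, one_mul]
    rw [hexp] at hsum
    rw [hkl]
    linarith
  have step3 : Real.log Z < Real.log Zs := Real.log_lt_log hZpos hlt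
  rw [step1]
  linarith
end
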